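/- A signed magic rectangle SMR(m,n;r,2) exists if and only if either m = 2 and n = r ≡ 0, 3 (mod 4), or m ≥ 3, r ≥ 3 and mr = 2n. -/
import Mathlib

set_option linter.unusedTactic false
set_option linter.unreachableTactic false
set_option linter.unusedVariables false
set_option linter.unnecessarySeqFocus false


/-- The set of values used by a signed magic rectangle SMR(m,n;r,s):
`{0, ±1, …, ±(ms−1)/2}` if `m*r` is odd, and `{±1, …, ±(m*r/2)}` if `m*r` is even. -/
def SMRvalue (m r s : ℕ) (x : ℤ) : Prop :=
  if m * r % 2 = 1 then |x| ≤ ((m : ℤ) * s - 1) / 2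
  else x ≠ 0 ∧ |x| ≤ (m : ℤ) * r / 2

/-- `A` (a partially filled `m × n` integer array) is a signed magic rectangle
SMR(m,n;r,s): exactly `r` filled cells per row, `s` per column, every value of
the value set appears exactly once, all entries are values, and all row and
column sums are zero. -/
def IsSMR (m n r s : ℕ) (A : Fin m → Fin n → Option ℤ) : Prop :=
  (∀ i, (Finset.univ.filter fun j => (A i j).isSome).card = r) ∧
  (∀ j, (Finset.univ.filter fun i => (A i j).isSome).card = s) ∧
  (∀ i j x, A i j = some x → SMRvalue m r s x) ∧
  (∀ x : ℤ, SMRvalue m r s x → ∃! p : Fin m × Fin n, A p.1 p.2 = some x) ∧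
  (∀ i, ∑ j, (A i j).getD 0 = 0) ∧
  (∀ j, ∑ i, (A i j).getD 0 = 0)

/-- A signed magic rectangle SMR(m,n;r,s) exists. -/
def SMR (m n r s : ℕ) : Prop := ∃ A : Fin m → Fin n → Option ℤ, IsSMR m n r s A

/-- The array has equally many positive and negative entries in every row and
in every column. -/
def IsShiftable (m n : ℕ) (A : Fin m → Fin n → Option ℤ) : Prop :=
  (∀ i, (Finset.univ.filter fun j => 0 < (A i j).getD 0).card =
        (Finset.univ.filter fun j => (A i j).getD 0 < 0).card) ∧
  (∀ j, (Finset.univ.filter fun i => 0 < (A i j).getD 0).card =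
        (Finset.univ.filter fun i => (A i j).getD 0 < 0).card)

/-- A shiftable signed magic rectangle SMR(m,n;r,s) exists. -/
def ShiftableSMR (m n r s : ℕ) : Prop :=
  ∃ A : Fin m → Fin n → Option ℤ, IsSMR m n r s A ∧ IsShiftable m n A

namespace SMRaux


/-- Row data for an SMR(m,n;r,2): each row lists its `r` entries. -/
def GoodB (m r n : ℕ) (B : Fin m → Fin r → ℤ) : Prop :=
  (∀ i, ∑ k, B i k = 0) ∧
  (∀ i k, B i k ≠ 0 ∧ (B i k).natAbs ≤ n) ∧
  (Function.Injective fun p : Fin m × Fin r => B p.1 p.2) ∧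
  (∀ i k k', B i k ≠ - B i k')

theorem smr_of_B (m r n : ℕ) (hm : 1 ≤ m) (hr : 1 ≤ r) (hn : m * r = 2 * n)
    (B : Fin m → Fin r → ℤ) (hB : GoodB m r n B) : SMR m n r 2 := by
  classical
  obtain ⟨h1, h2, h3, h4⟩ := hB
  have hbpos : ∀ i k, 1 ≤ (B i k).natAbs ∧ (B i k).natAbs ≤ n := by
    intro i k; have := h2 i k; omega
  have hn1 : 1 ≤ n := by
    have := hbpos ⟨0, hm⟩ ⟨0, hr⟩; omega
  -- every admissible value occurs exactly once among the B's
  have uniq : ∀ x : ℤ, x ≠ 0 → x.natAbs ≤ n → ∃! p : Fin m × Fin r, B p.1 p.2 = x := by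
    intro x hx hxn
    have hcard : (Finset.univ.image fun p : Fin m × Fin r => B p.1 p.2).card = m * r := by
      rw [Finset.card_image_of_injective _ h3, Finset.card_univ, Fintype.card_prod,
        Fintype.card_fin, Fintype.card_fin]
    have hsub : (Finset.univ.image fun p : Fin m × Fin r => B p.1 p.2) ⊆
        (Finset.Icc (-(n : ℤ)) n).erase 0 := by
      intro y hy
      simp only [Finset.mem_image] at hy
      obtain ⟨p, -, rfl⟩ := hy
      have := h2 p.1 p.2
      simp only [Finset.mem_erase, Finset.mem_Icc]
      omega
    have htcard : ((Finset.Icc (-(n : ℤ)) n).erase 0).card = 2 * n := by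
      rw [Finset.card_erase_of_mem (by simp only [Finset.mem_Icc]; omega), Int.card_Icc]
      omega
    have heq : (Finset.univ.image fun p : Fin m × Fin r => B p.1 p.2) =
        (Finset.Icc (-(n : ℤ)) n).erase 0 :=
      Finset.eq_of_subset_of_card_le hsub (by rw [hcard, htcard]; omega)
    have hxmem : x ∈ Finset.univ.image fun p : Fin m × Fin r => B p.1 p.2 := by
      rw [heq]; simp only [Finset.mem_erase, Finset.mem_Icc]; omega
    obtain ⟨p, -, hp⟩ := Finset.mem_image.1 hxmem
    refine ⟨p, hp, fun q hq => h3 ?_⟩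
    show B q.1 q.2 = B p.1 p.2
    rw [hp, hq]
  set φ : Fin m → Fin r → Fin n := fun i k => ⟨(B i k).natAbs - 1, by have := hbpos i k; omega⟩
    with hφ
  set A : Fin m → Fin n → Option ℤ := fun i j =>
    if ∃ k, B i k = (j.val : ℤ) + 1 then some ((j.val : ℤ) + 1)
    else if ∃ k, B i k = -((j.val : ℤ) + 1) then some (-((j.val : ℤ) + 1)) else none
    with hA
  have hAsome : ∀ i j x, A i j = some x → (∃ k, B i k = x) ∧ x.natAbs = j.val + 1 := by
    intro i j x h
    simp only [hA] at h
    split_ifs at h with hc1 hc2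
    · obtain ⟨k, hk⟩ := hc1
      obtain rfl : (j.val : ℤ) + 1 = x := Option.some.inj h
      exact ⟨⟨k, hk⟩, by omega⟩
    · obtain ⟨k, hk⟩ := hc2
      obtain rfl : -((j.val : ℤ) + 1) = x := Option.some.inj h
      exact ⟨⟨k, hk⟩, by omega⟩
  have hAφ : ∀ i k, A i (φ i k) = some (B i k) := by
    intro i k
    have hb := hbpos i k
    have hne := (h2 i k).1
    have hv : ((φ i k).val : ℤ) + 1 = (B i k).natAbs := by
      simp only [hφ]; omega
    simp only [hA]
    rcases lt_trichotomy (B i k) 0 with hlt | h0 | hgt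
    · rw [if_neg, if_pos ⟨k, by rw [hv]; omega⟩]
      · congr 1; rw [hv]; omega
      · rintro ⟨k', hk'⟩
        rw [hv] at hk'
        exact h4 i k' k (by omega)
    · exact absurd h0 hne
    · rw [if_pos ⟨k, by rw [hv]; omega⟩]
      congr 1; rw [hv]; omega
  have hAnone : ∀ i j, (∀ k, (B i k).natAbs ≠ j.val + 1) → A i j = none := by
    intro i j hj
    simp only [hA]
    rw [if_neg, if_neg]
    · rintro ⟨k, hk⟩; exact hj k (by omega)
    · rintro ⟨k, hk⟩; exact hj k (by omega)
  have hiff : ∀ i j, (A i j).isSome = true ↔ ∃ k, (B i k).natAbs = j.val + 1 := by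
    intro i j
    constructor
    · intro h
      obtain ⟨x, hx⟩ := Option.isSome_iff_exists.1 h
      obtain ⟨⟨k, hk⟩, habs⟩ := hAsome i j x hx
      exact ⟨k, by rw [hk]; exact habs⟩
    · rintro ⟨k, hk⟩
      have : j = φ i k := Fin.ext (by simp only [hφ]; omega)
      rw [this, hAφ]; rfl
  have hφinj : ∀ i, Function.Injective (φ i) := by
    intro i k k' h
    have habs : (B i k).natAbs = (B i k').natAbs := by
      have h1' := hbpos i k; have h2' := hbpos i k'
      have := Fin.mk.injEq ((B i k).natAbs - 1) _ ((B i k').natAbs - 1) _ ▸ h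
      simp only [hφ, Fin.mk.injEq] at h
      omega
    rcases (by omega : B i k = B i k' ∨ B i k = -(B i k')) with he | he
    · have : (⟨i, k⟩ : Fin m × Fin r) = ⟨i, k'⟩ := h3 he
      exact (Prod.mk.injEq _ _ _ _ ▸ this).2
    · exact absurd he (h4 i k k')
  refine ⟨A, ?_, ?_, ?_, ?_, ?_, ?_⟩
  · -- row counts
    intro i
    have himg : (Finset.univ.filter fun j => (A i j).isSome) = Finset.univ.image (φ i) := by
      ext j
      simp only [Finset.mem_filter, Finset.mem_image, Finset.mem_univ, true_and]
      rw [hiff]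
      constructor
      · rintro ⟨k, hk⟩
        exact ⟨k, Fin.ext (by simp only [hφ]; omega)⟩
      · rintro ⟨k, rfl⟩
        exact ⟨k, by simp only [hφ]; have := hbpos i k; omega⟩
    rw [himg, Finset.card_image_of_injective _ (hφinj i), Finset.card_univ, Fintype.card_fin]
  · -- column counts
    intro j
    obtain ⟨p, hp, hpu⟩ := uniq ((j.val : ℤ) + 1) (by omega) (by omega)
    obtain ⟨q, hq, hqu⟩ := uniq (-((j.val : ℤ) + 1)) (by omega) (by omega)
    have hpq : p.1 ≠ q.1 := by
      intro h
      exact h4 p.1 p.2 q.2 (by rw [hp, h, hq]; ring)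
    have hset : (Finset.univ.filter fun i => (A i j).isSome) = {p.1, q.1} := by
      ext i
      simp only [Finset.mem_filter, Finset.mem_univ, true_and, Finset.mem_insert,
        Finset.mem_singleton]
      rw [hiff]
      constructor
      · rintro ⟨k, hk⟩
        rcases (by have := (h2 i k).1; omega :
            B i k = (j.val : ℤ) + 1 ∨ B i k = -((j.val : ℤ) + 1)) with he | he
        · left; have : (i, k) = p := hpu (i, k) he
          rw [← this]
        · right; have : (i, k) = q := hqu (i, k) he
          rw [← this]
      · rintro (rfl | rfl)
        · exact ⟨p.2, by rw [hp]; omega⟩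
        · exact ⟨q.2, by rw [hq]; omega⟩
    rw [hset, Finset.card_insert_of_notMem (by simpa using hpq), Finset.card_singleton]
  · -- values
    intro i j x h
    obtain ⟨⟨k, hk⟩, habs⟩ := hAsome i j x h
    unfold SMRvalue
    rw [if_neg (by omega)]
    have hcast : (m : ℤ) * r = 2 * n := by exact_mod_cast hn
    have habs' : |x| = x.natAbs := Int.abs_eq_natAbs x
    constructor
    · omega
    · rw [hcast]
      have h2' : (2 * (n : ℤ)) / 2 = n := by omega
      rw [h2', habs']
      have : j.val < n := j.2
      omega
  · -- each value exactly once
    intro x hx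
    unfold SMRvalue at hx
    rw [if_neg (by omega)] at hx
    obtain ⟨hx0, hxle⟩ := hx
    have hcast : (m : ℤ) * r = 2 * n := by exact_mod_cast hn
    rw [hcast] at hxle
    have habs' : |x| = x.natAbs := Int.abs_eq_natAbs x
    have hxn : x.natAbs ≤ n := by omega
    have hxn1 : 1 ≤ x.natAbs := by omega
    obtain ⟨p, hp, hpu⟩ := uniq x hx0 hxn
    refine ⟨(p.1, ⟨x.natAbs - 1, by omega⟩), ?_, ?_⟩
    · show A p.1 _ = some x
      have : (⟨x.natAbs - 1, by omega⟩ : Fin n) = φ p.1 p.2 := by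
        apply Fin.ext; simp only [hφ]; rw [hp]
      rw [this, hAφ, hp]
    · rintro ⟨i', j'⟩ h'
      obtain ⟨⟨k', hk'⟩, habs2⟩ := hAsome i' j' x h'
      have hpe : (i', k') = p := hpu (i', k') hk'
      have : i' = p.1 := by rw [← hpe]
      subst this
      simp only [Prod.mk.injEq, true_and]
      apply Fin.ext; simp only []; omega
  · -- row sums
    intro i
    have hz : ∀ j ∈ Finset.univ, j ∉ Finset.univ.image (φ i) → (A i j).getD 0 = 0 := by
      intro j _ hj
      rw [hAnone i j, Option.getD_none]
      intro k hk
      exact hj (Finset.mem_image.2 ⟨k, Finset.mem_univ k, Fin.ext (by simp only [hφ]; omega)⟩)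
    rw [← Finset.sum_subset (Finset.subset_univ (Finset.univ.image (φ i))) hz]
    rw [Finset.sum_image (fun k _ k' _ h => hφinj i h)]
    calc ∑ k, (A i (φ i k)).getD 0 = ∑ k, B i k := by
          apply Finset.sum_congr rfl
          intro k _
          rw [hAφ, Option.getD_some]
      _ = 0 := h1 i
  · -- column sums
    intro j
    obtain ⟨p, hp, hpu⟩ := uniq ((j.val : ℤ) + 1) (by omega) (by omega)
    obtain ⟨q, hq, hqu⟩ := uniq (-((j.val : ℤ) + 1)) (by omega) (by omega)
    have hpq : p.1 ≠ q.1 := by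
      intro h
      exact h4 p.1 p.2 q.2 (by rw [hp, h, hq]; ring)
    have hz : ∀ i ∈ Finset.univ, i ∉ ({p.1, q.1} : Finset (Fin m)) → (A i j).getD 0 = 0 := by
      intro i _ hi
      simp only [Finset.mem_insert, Finset.mem_singleton, not_or] at hi
      rw [hAnone i j, Option.getD_none]
      intro k hk
      rcases (by have := (h2 i k).1; omega :
          B i k = (j.val : ℤ) + 1 ∨ B i k = -((j.val : ℤ) + 1)) with he | he
      · exact hi.1 (by have : (i, k) = p := hpu (i, k) he; rw [← this])
      · exact hi.2 (by have : (i, k) = q := hqu (i, k) he; rw [← this])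
    rw [← Finset.sum_subset (Finset.subset_univ ({p.1, q.1} : Finset (Fin m))) hz,
      Finset.sum_pair hpq]
    have hap : A p.1 j = some ((j.val : ℤ) + 1) := by
      have he : j = φ p.1 p.2 := Fin.ext (by simp only [hφ]; rw [hp]; omega)
      conv_lhs => rw [he]
      rw [hAφ, hp]
    have haq : A q.1 j = some (-((j.val : ℤ) + 1)) := by
      have he : j = φ q.1 q.2 := Fin.ext (by simp only [hφ]; rw [hq]; omega)
      conv_lhs => rw [he]
      rw [hAφ, hq]
    rw [hap, haq, Option.getD_some, Option.getD_some]
    ring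




def S4B (m : ℕ) : Fin m → Fin 4 → ℤ := fun i =>
  let s : ℤ := if i.val + 2 ≤ m then (i.val : ℤ) + 2 else 1
  ![(i.val : ℤ) + 1, 2*(m:ℤ) + 1 - ((i.val : ℤ) + 1), -s, -(2*(m:ℤ) + 1 - s)]

theorem s4_good (m : ℕ) (hm : 2 ≤ m) : GoodB m 4 (2*m) (S4B m) := by
  refine ⟨?_, ?_, ?_, ?_⟩
  · intro i
    rw [Fin.sum_univ_four]
    simp [S4B]
    (try split_ifs) <;> ring
  · intro i k
    have hi := i.isLt
    fin_cases k <;>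
      simp [S4B] <;> (try split_ifs) <;> first | omega | trivial
  · rintro ⟨i, k⟩ ⟨i', k'⟩ h
    simp only at h
    have hi := i.isLt
    have hi' := i'.isLt
    fin_cases k <;> fin_cases k' <;>
      simp [S4B] at h <;> (try split_ifs at h) <;>
      first
        | (exfalso; omega)
        | (rw [Prod.mk.injEq]; exact ⟨Fin.ext (by omega), rfl⟩)
        | trivial
  · intro i k k'
    have hi := i.isLt
    fin_cases k <;> fin_cases k' <;>
      simp [S4B] <;> (try split_ifs) <;> first | omega | trivial

theorem s4_shift (m : ℕ) (hm : 2 ≤ m) :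
    ∀ (i : Fin m) (c : ℤ), 0 ≤ c →
      ∑ k, (if 0 < S4B m i k then S4B m i k + c else S4B m i k - c) = 0 := by
  intro i c hc
  have hi := i.isLt
  rw [Fin.sum_univ_four]
  simp [S4B]
  (try split_ifs) <;> omega

def glueB (r n : ℕ) {m : ℕ} (B : Fin m → Fin r → ℤ) (C : Fin m → Fin 4 → ℤ) :
    Fin m → Fin (r + 4) → ℤ := fun i =>
  Fin.addCases (B i) (fun k => if 0 < C i k then C i k + (n : ℤ) else C i k - n)

theorem fin_split (r : ℕ) (k : Fin (r + 4)) :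
    (∃ k₁ : Fin r, k = Fin.castAdd 4 k₁) ∨ (∃ k₂ : Fin 4, k = Fin.natAdd r k₂) := by
  obtain ⟨k, hk⟩ := k
  by_cases h : k < r
  · exact Or.inl ⟨⟨k, h⟩, Fin.ext rfl⟩
  · exact Or.inr ⟨⟨k - r, by omega⟩, Fin.ext (by simp [Fin.natAdd]; omega)⟩

theorem glue_good {m r n : ℕ} (B : Fin m → Fin r → ℤ) (C : Fin m → Fin 4 → ℤ)
    (hB : GoodB m r n B) (hC : GoodB m 4 (2*m) C)
    (hS : ∀ (i : Fin m) (c : ℤ), 0 ≤ c →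
      ∑ k, (if 0 < C i k then C i k + c else C i k - c) = 0) :
    GoodB m (r + 4) (n + 2 * m) (glueB r n B C) := by
  obtain ⟨hB1, hB2, hB3, hB4⟩ := hB
  obtain ⟨hC1, hC2, hC3, hC4⟩ := hC
  have hL : ∀ (i : Fin m) (k : Fin r), glueB r n B C i (Fin.castAdd 4 k) = B i k := by
    intro i k; simp [glueB]
  have hR : ∀ (i : Fin m) (k : Fin 4), glueB r n B C i (Fin.natAdd r k) =
      if 0 < C i k then C i k + (n : ℤ) else C i k - n := by
    intro i k; simp [glueB]
  refine ⟨?_, ?_, ?_, ?_⟩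
  · intro i
    rw [Fin.sum_univ_add]
    simp_rw [hL, hR]
    rw [hB1 i, hS i n (by positivity)]
    ring
  · intro i k
    rcases fin_split r k with ⟨k₁, rfl⟩ | ⟨k₂, rfl⟩
    · rw [hL]
      have := hB2 i k₁
      constructor
      · exact this.1
      · omega
    · rw [hR]
      have := hC2 i k₂
      split_ifs <;> constructor <;> omega
  · rintro ⟨i, k⟩ ⟨i', k'⟩ h
    simp only at h
    rcases fin_split r k with ⟨k₁, rfl⟩ | ⟨k₂, rfl⟩ <;>
      rcases fin_split r k' with ⟨k₁', rfl⟩ | ⟨k₂', rfl⟩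
    · rw [hL, hL] at h
      have := hB3 (show (fun p : Fin m × Fin r => B p.1 p.2) (i, k₁) = (fun p => B p.1 p.2) (i', k₁') from h)
      rw [Prod.mk.injEq] at this ⊢
      exact ⟨this.1, by rw [this.2]⟩
    · rw [hL, hR] at h
      have h1 := hB2 i k₁
      have h2 := hC2 i' k₂'
      split_ifs at h <;> (exfalso; omega)
    · rw [hR, hL] at h
      have h1 := hC2 i k₂
      have h2 := hB2 i' k₁'
      split_ifs at h <;> (exfalso; omega)
    · rw [hR, hR] at h
      have h1 := hC2 i k₂
      have h2 := hC2 i' k₂'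
      split_ifs at h with hs1 hs2 hs2
      · have : C i k₂ = C i' k₂' := by omega
        have := hC3 (show (fun p : Fin m × Fin 4 => C p.1 p.2) (i, k₂) = (fun p => C p.1 p.2) (i', k₂') from this)
        rw [Prod.mk.injEq] at this ⊢
        exact ⟨this.1, by rw [this.2]⟩
      · exfalso; omega
      · exfalso; omega
      · have : C i k₂ = C i' k₂' := by omega
        have := hC3 (show (fun p : Fin m × Fin 4 => C p.1 p.2) (i, k₂) = (fun p => C p.1 p.2) (i', k₂') from this)
        rw [Prod.mk.injEq] at this ⊢
        exact ⟨this.1, by rw [this.2]⟩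
  · intro i k k'
    rcases fin_split r k with ⟨k₁, rfl⟩ | ⟨k₂, rfl⟩ <;>
      rcases fin_split r k' with ⟨k₁', rfl⟩ | ⟨k₂', rfl⟩
    · rw [hL, hL]; exact hB4 i k₁ k₁'
    · rw [hL, hR]
      have h1 := hB2 i k₁
      have h2 := hC2 i k₂'
      split_ifs <;> omega
    · rw [hR, hL]
      have h1 := hC2 i k₂
      have h2 := hB2 i k₁'
      split_ifs <;> omega
    · rw [hR, hR]
      have h1 := hC2 i k₂
      have h2 := hC2 i k₂'
      have h3 := hC4 i k₂ k₂'
      split_ifs <;> omega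

theorem steps (m : ℕ) (hm : 2 ≤ m) (K : ℕ) :
    ∀ (r n : ℕ) (B : Fin m → Fin r → ℤ), GoodB m r n B →
      ∃ B' : Fin m → Fin (r + 4 * K) → ℤ, GoodB m (r + 4 * K) (n + 2 * m * K) B' := by
  induction K with
  | zero => intro r n B hB; exact ⟨B, hB⟩
  | succ K ih =>
    intro r n B hB
    obtain ⟨B', hB'⟩ := ih (r + 4) (n + 2 * m) (glueB r n B (S4B m))
      (glue_good B (S4B m) hB (s4_good m hm) (s4_shift m hm))
    rw [show r + 4 * (K + 1) = r + 4 + 4 * K from by ring,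
      show n + 2 * m * (K + 1) = n + 2 * m + 2 * m * K from by ring]
    exact ⟨B', hB'⟩




@[simp] lemma vec5_four (a b c d e : ℤ) : ![a,b,c,d,e] 4 = e := rfl
@[simp] lemma vec6_four (a b c d e f : ℤ) : ![a,b,c,d,e,f] 4 = e := rfl
@[simp] lemma vec6_five (a b c d e f : ℤ) : ![a,b,c,d,e,f] 5 = f := rfl

def P3B (t : ℕ) : Fin (2*t) → Fin 3 → ℤ := fun i =>
  ![if i.val < t then (i.val : ℤ) + 1 else 4*(t : ℤ) - i.val,
    if i.val < t then (t : ℤ) + i.val + 1 else -((i.val : ℤ) - t + 1),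
    if i.val < t then -((t : ℤ) + 2*i.val + 2) else -(5*(t : ℤ) - 1 - 2*i.val)]

set_option maxHeartbeats 1000000 in
theorem p3_good (t : ℕ) (ht : 1 ≤ t) : GoodB (2*t) 3 (3*t) (P3B t) := by
  refine ⟨?_, ?_, ?_, ?_⟩
  · intro i
    have hi := i.isLt
    rw [Fin.sum_univ_three]
    simp [P3B]
    (try split_ifs) <;> omega
  · intro i k
    have hi := i.isLt
    fin_cases k <;> simp [P3B] <;> (try split_ifs) <;> first | omega | (norm_num; omega) | norm_num | trivial
  · rintro ⟨i, k⟩ ⟨i', k'⟩ h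
    simp only at h
    have hi := i.isLt
    have hi' := i'.isLt
    fin_cases k <;> fin_cases k' <;> simp [P3B] at h <;> (try split_ifs at h) <;>
      first
        | (exfalso; omega)
        | (rw [Prod.mk.injEq]; exact ⟨Fin.ext (by omega), rfl⟩)
        | trivial
  · intro i k k'
    have hi := i.isLt
    fin_cases k <;> fin_cases k' <;> simp [P3B] <;> (try split_ifs) <;>
      first | omega | (norm_num; omega) | norm_num | trivial

def P5B (t : ℕ) : Fin (2*t) → Fin 5 → ℤ := fun i =>
  ![if i.val < t then (if i.val + 2 ≤ t then (i.val : ℤ) + 2 else 1) else 4*(t : ℤ) - i.val,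
    if i.val < t then (t : ℤ) + i.val + 1
      else (if i.val + 2 ≤ 2*t then -((i.val : ℤ) - t + 2) else -1),
    if i.val < t then -((t : ℤ) + 2*i.val + 2) else -(5*(t : ℤ) - 1 - 2*i.val),
    if i.val < t then (if i.val + 2 ≤ t then 3*(t : ℤ) + i.val + 1 else 4*(t : ℤ))
      else (if i.val + 2 ≤ 2*t then 3*(t : ℤ) + i.val + 2 else 4*(t : ℤ) + 1),
    if i.val < t then (if i.val + 2 ≤ t then -(3*(t : ℤ) + i.val + 2) else -(3*(t : ℤ) + 1))
      else (if i.val + 2 ≤ 2*t then -(3*(t : ℤ) + i.val + 1) else -5*(t : ℤ))]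

set_option maxHeartbeats 2000000 in
theorem p5_good (t : ℕ) (ht : 2 ≤ t) : GoodB (2*t) 5 (5*t) (P5B t) := by
  refine ⟨?_, ?_, ?_, ?_⟩
  · intro i
    have hi := i.isLt
    rw [Fin.sum_univ_five]
    simp [P5B]
    (try split_ifs) <;> omega
  · intro i k
    have hi := i.isLt
    fin_cases k <;> simp [P5B] <;> (try split_ifs) <;> first | omega | (norm_num; omega) | norm_num | trivial
  · rintro ⟨i, k⟩ ⟨i', k'⟩ h
    simp only at h
    have hi := i.isLt
    have hi' := i'.isLt
    fin_cases k <;> fin_cases k' <;> simp [P5B] at h <;> (try split_ifs at h) <;>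
      first
        | (exfalso; omega)
        | (rw [Prod.mk.injEq]; exact ⟨Fin.ext (by omega), rfl⟩)
        | trivial
  · intro i k k'
    have hi := i.isLt
    fin_cases k <;> fin_cases k' <;> simp [P5B] <;> (try split_ifs) <;>
      first | omega | (norm_num; omega) | norm_num | trivial

def R6B (m : ℕ) : Fin m → Fin 6 → ℤ := fun i =>
  ![(i.val : ℤ) + 1,
    2*(m : ℤ) - i.val,
    if i.val + 2 ≤ m then -((i.val : ℤ) + 2) else -1,
    if 1 ≤ i.val then -(2*(m : ℤ) + 1 - i.val) else -((m : ℤ) + 1),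
    if i.val = 0 then 2*(m : ℤ) + 1 else if i.val + 2 ≤ m then 2*(m : ℤ) + i.val + 2
      else 2*(m : ℤ) + 2,
    if i.val = 0 then -(3*(m : ℤ) - 1) else if i.val + 2 ≤ m then -(2*(m : ℤ) + i.val)
      else -(3*(m : ℤ))]

set_option maxHeartbeats 2000000 in
theorem r6_good (m : ℕ) (hm : 3 ≤ m) : GoodB m 6 (3*m) (R6B m) := by
  refine ⟨?_, ?_, ?_, ?_⟩
  · intro i
    have hi := i.isLt
    rw [Fin.sum_univ_six]
    simp [R6B]
    (try split_ifs) <;> omega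
  · intro i k
    have hi := i.isLt
    fin_cases k <;> simp [R6B] <;> (try split_ifs) <;> first | omega | (norm_num; omega) | norm_num | trivial
  · rintro ⟨i, k⟩ ⟨i', k'⟩ h
    simp only at h
    have hi := i.isLt
    have hi' := i'.isLt
    fin_cases k <;> fin_cases k' <;> simp [R6B] at h <;> (try split_ifs at h) <;>
      first
        | (exfalso; omega)
        | (rw [Prod.mk.injEq]; exact ⟨Fin.ext (by omega), rfl⟩)
        | trivial
  · intro i k k'
    have hi := i.isLt
    fin_cases k <;> fin_cases k' <;> simp [R6B] <;> (try split_ifs) <;>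
      first | omega | (norm_num; omega) | norm_num | trivial



theorem pair_of_filter {α : Type*} [Fintype α] [DecidableEq α] (f : α → Option ℤ)
    (hcard : (Finset.univ.filter fun a => (f a).isSome).card = 2)
    (hsum : ∑ a, (f a).getD 0 = 0) :
    ∃ a b x, a ≠ b ∧ f a = some x ∧ f b = some (-x) ∧
      ∀ c, (f c).isSome → c = a ∨ c = b := by
  obtain ⟨a, b, hne, hset⟩ := Finset.card_eq_two.1 hcard
  have hmem : ∀ c, (f c).isSome ↔ c = a ∨ c = b := by
    intro c
    constructor
    · intro h
      have : c ∈ Finset.univ.filter fun a => (f a).isSome :=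
        Finset.mem_filter.2 ⟨Finset.mem_univ c, h⟩
      rw [hset] at this
      simpa using this
    · intro h
      have : c ∈ ({a, b} : Finset α) := by simpa using h
      rw [← hset] at this
      exact (Finset.mem_filter.1 this).2
  have ha : (f a).isSome := (hmem a).2 (Or.inl rfl)
  have hb : (f b).isSome := (hmem b).2 (Or.inr rfl)
  obtain ⟨x, hx⟩ := Option.isSome_iff_exists.1 ha
  obtain ⟨y, hy⟩ := Option.isSome_iff_exists.1 hb
  have hsum2 : x + y = 0 := by
    have hz : ∀ c ∈ Finset.univ, c ∉ ({a, b} : Finset α) → (f c).getD 0 = 0 := by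
      intro c _ hc
      have hns : ¬ (f c).isSome := by rw [hmem]; simpa using hc
      rw [Option.not_isSome_iff_eq_none.1 hns]
      rfl
    rw [← Finset.sum_subset (Finset.subset_univ ({a, b} : Finset α)) hz,
      Finset.sum_pair hne, hx, hy] at hsum
    simpa using hsum
  refine ⟨a, b, x, hne, hx, ?_, fun c h => (hmem c).1 h⟩
  rw [hy]
  congr 1
  omega

theorem forward (m n r : ℕ) (hm1 : 1 ≤ m) (hn1 : 1 ≤ n) (hr1 : 1 ≤ r)
    (h : SMR m n r 2) :
    (m = 2 ∧ n = r ∧ (r % 4 = 0 ∨ r % 4 = 3)) ∨ (3 ≤ m ∧ 3 ≤ r ∧ m * r = 2 * n) := by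
  classical
  obtain ⟨A, hrow, hcol, hval, huniq, hrsum, hcsum⟩ := h
  -- double counting
  have hcount : m * r = 2 * n := by
    have hc : ∀ (i : Fin m), ∑ j : Fin n, (if (A i j).isSome then 1 else 0) = r := by
      intro i; rw [← Finset.card_filter]; exact hrow i
    have hc2 : ∀ (j : Fin n), ∑ i : Fin m, (if (A i j).isSome then 1 else 0) = 2 := by
      intro j; rw [← Finset.card_filter]; exact hcol j
    have e1 : ∑ i : Fin m, ∑ j : Fin n, (if (A i j).isSome then 1 else 0) = m * r := by
      rw [Finset.sum_congr rfl fun i _ => hc i, Finset.sum_const, Finset.card_univ,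
        Fintype.card_fin, smul_eq_mul]
    have e2 : ∑ j : Fin n, ∑ i : Fin m, (if (A i j).isSome then 1 else 0) = n * 2 := by
      rw [Finset.sum_congr rfl fun j _ => hc2 j, Finset.sum_const, Finset.card_univ,
        Fintype.card_fin, smul_eq_mul]
    rw [Finset.sum_comm] at e1
    omega
  have hmr2 : ¬ m * r % 2 = 1 := by omega
  have hcastc : (m : ℤ) * r = 2 * n := by exact_mod_cast hcount
  have hval' : ∀ i j x, A i j = some x → x ≠ 0 ∧ x.natAbs ≤ n := by
    intro i j x hx
    have h2 := hval i j x hx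
    unfold SMRvalue at h2
    rw [if_neg hmr2] at h2
    obtain ⟨h3, h4⟩ := h2
    rw [hcastc] at h4
    have := Int.abs_eq_natAbs x
    refine ⟨h3, by omega⟩
  have hsmrval : ∀ x : ℤ, x ≠ 0 → x.natAbs ≤ n → SMRvalue m r 2 x := by
    intro x h1 h2
    unfold SMRvalue
    rw [if_neg hmr2, hcastc]
    have := Int.abs_eq_natAbs x
    exact ⟨h1, by omega⟩
  have hm2 : 2 ≤ m := by
    have hc := hcol ⟨0, hn1⟩
    have hle := Finset.card_filter_le (Finset.univ : Finset (Fin m))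
      (fun i => (A i ⟨0, hn1⟩).isSome)
    rw [hc, Finset.card_univ, Fintype.card_fin] at hle
    exact hle
  have hrne1 : r ≠ 1 := by
    intro hr
    subst hr
    obtain ⟨j₀, hj⟩ := Finset.card_eq_one.1 (hrow ⟨0, by omega⟩)
    set i : Fin m := ⟨0, by omega⟩ with hi
    have hz : ∀ jj ∈ Finset.univ, jj ∉ ({j₀} : Finset (Fin n)) → (A i jj).getD 0 = 0 := by
      intro jj _ hjj
      have hns : ¬ (A i jj).isSome := by
        intro hs
        have : jj ∈ Finset.univ.filter fun j => (A i j).isSome :=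
          Finset.mem_filter.2 ⟨Finset.mem_univ _, hs⟩
        rw [hj] at this
        exact hjj this
      rw [Option.not_isSome_iff_eq_none.1 hns]
      rfl
    have hsum := hrsum i
    rw [← Finset.sum_subset (Finset.subset_univ ({j₀} : Finset (Fin n))) hz,
      Finset.sum_singleton] at hsum
    have hs : (A i j₀).isSome := by
      have : j₀ ∈ Finset.univ.filter fun j => (A i j).isSome := by
        rw [hj]; exact Finset.mem_singleton_self _
      exact (Finset.mem_filter.1 this).2
    obtain ⟨x, hx⟩ := Option.isSome_iff_exists.1 hs
    rw [hx, Option.getD_some] at hsum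
    exact (hval' i j₀ x hx).1 hsum
  have hrne2 : r ≠ 2 := by
    intro hr
    subst hr
    obtain ⟨p, hp, hpu⟩ := huniq 1 (hsmrval 1 one_ne_zero (by simpa using hn1))
    have hp2 : (A p.1 p.2).isSome := by rw [hp]; rfl
    -- another -1 in the same row
    obtain ⟨a, b, x, hab, hxa, hxb, hmem⟩ :=
      pair_of_filter (fun j => A p.1 j) (hrow p.1) (hrsum p.1)
    have hrowpair : ∃ j', j' ≠ p.2 ∧ A p.1 j' = some (-1) := by
      rcases hmem p.2 hp2 with he | he
      · have hxa' : A p.1 p.2 = some x := by rw [he]; exact hxa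
        have hx1 : x = 1 := Option.some.inj (hxa'.symm.trans hp)
        refine ⟨b, ?_, by rw [hxb, hx1]⟩
        rw [he]; exact fun hh => hab hh.symm
      · have hxb' : A p.1 p.2 = some (-x) := by rw [he]; exact hxb
        have hx1 : -x = 1 := Option.some.inj (hxb'.symm.trans hp)
        refine ⟨a, ?_, by rw [hxa]; congr 1; omega⟩
        rw [he]; exact hab
    -- another -1 in the same column
    obtain ⟨c, d, y, hcd, hyc, hyd, hmemc⟩ :=
      pair_of_filter (fun i => A i p.2) (hcol p.2) (hcsum p.2)
    have hcolpair : ∃ i', i' ≠ p.1 ∧ A i' p.2 = some (-1) := by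
      rcases hmemc p.1 hp2 with he | he
      · have hyc' : A p.1 p.2 = some y := by rw [he]; exact hyc
        have hy1 : y = 1 := Option.some.inj (hyc'.symm.trans hp)
        refine ⟨d, ?_, by rw [hyd, hy1]⟩
        rw [he]; exact fun hh => hcd hh.symm
      · have hyd' : A p.1 p.2 = some (-y) := by rw [he]; exact hyd
        have hy1 : -y = 1 := Option.some.inj (hyd'.symm.trans hp)
        refine ⟨c, ?_, by rw [hyc]; congr 1; omega⟩
        rw [he]; exact hcd
    obtain ⟨j', hj'ne, hj'⟩ := hrowpair
    obtain ⟨i', hi'ne, hi'⟩ := hcolpair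
    obtain ⟨q, hq, hqu⟩ := huniq (-1) (hsmrval (-1) (by norm_num) (by simpa using hn1))
    have e1 : (p.1, j') = q := hqu (p.1, j') hj'
    have e2 : (i', p.2) = q := hqu (i', p.2) hi'
    have e3 : (p.1, j') = (i', p.2) := e1.trans e2.symm
    rw [Prod.mk.injEq] at e3
    exact hj'ne e3.2
  -- case split on m
  by_cases hm : m = 2
  · subst hm
    left
    have hnr : n = r := by omega
    subst hnr
    refine ⟨rfl, rfl, ?_⟩
    -- column structure
    have hcol2 : ∀ j, ∃ x : ℤ, A 0 j = some x ∧ A 1 j = some (-x) := by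
      intro j
      obtain ⟨a, b, x, hab, hxa, hxb, -⟩ :=
        pair_of_filter (fun i => A i j) (hcol j) (hcsum j)
      fin_cases a <;> fin_cases b
      · exact absurd rfl hab
      · exact ⟨x, hxa, hxb⟩
      · exact ⟨-x, hxb, by rw [neg_neg]; exact hxa⟩
      · exact absurd rfl hab
    choose x hx0 hx1 using hcol2
    have hxprop : ∀ j, x j ≠ 0 ∧ (x j).natAbs ≤ n := fun j => hval' 0 j (x j) (hx0 j)
    set ψ : Fin n → Fin n := fun j => ⟨(x j).natAbs - 1, by have := hxprop j; omega⟩ with hψ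
    have hinj : Function.Injective ψ := by
      intro j j' hjj
      have habs : (x j).natAbs = (x j').natAbs := by
        have h1 := hxprop j; have h2 := hxprop j'
        simp only [hψ, Fin.mk.injEq] at hjj
        omega
      rcases (by omega : x j = x j' ∨ x j = -(x j')) with he | he
      · obtain ⟨q, hq, hqu⟩ := huniq (x j) (hsmrval _ (hxprop j).1 (hxprop j).2)
        have e1 := hqu (0, j) (hx0 j)
        have e2 := hqu (0, j') (by rw [he]; exact hx0 j')
        have e3 := e1.trans e2.symm
        rw [Prod.mk.injEq] at e3
        exact e3.2
      · obtain ⟨q, hq, hqu⟩ := huniq (x j) (hsmrval _ (hxprop j).1 (hxprop j).2)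
        have e1 := hqu (0, j) (hx0 j)
        have e2 := hqu (1, j') (by rw [he]; exact hx1 j')
        have e3 := e1.trans e2.symm
        rw [Prod.mk.injEq] at e3
        exact absurd e3.1 (by decide)
    have hbij : Function.Bijective ψ := Finite.injective_iff_bijective.1 hinj
    have hsum1 : ∑ j : Fin n, ((x j).natAbs : ℤ) = ∑ j : Fin n, ((j.val : ℤ) + 1) := by
      have he : ∀ j, ((x j).natAbs : ℤ) = ((ψ j).val : ℤ) + 1 := by
        intro j
        have := hxprop j
        simp only [hψ]
        omega
      rw [Finset.sum_congr rfl fun j _ => he j]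
      exact Fintype.sum_bijective ψ hbij _ _ (fun j => rfl)
    have hrow0 : ∑ j : Fin n, x j = 0 := by
      have hs := hrsum 0
      calc ∑ j : Fin n, x j = ∑ j : Fin n, (A 0 j).getD 0 :=
            Finset.sum_congr rfl fun j _ => by rw [hx0 j, Option.getD_some]
        _ = 0 := hs
    have hdvd : (2 : ℤ) ∣ ∑ j : Fin n, ((x j).natAbs : ℤ) := by
      have he : ∑ j : Fin n, ((x j).natAbs : ℤ)
          = ∑ j : Fin n, (((x j).natAbs : ℤ) - x j) := by
        rw [Finset.sum_sub_distrib, hrow0, sub_zero]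
      rw [he]
      refine Finset.dvd_sum fun j _ => ?_
      have := Int.natAbs_eq (x j)
      omega
    rw [hsum1] at hdvd
    have hcast2 : ∑ j : Fin n, ((j.val : ℤ) + 1) = ((∑ j : Fin n, (j.val + 1) : ℕ) : ℤ) := by
      push_cast
      rfl
    rw [hcast2] at hdvd
    have hdvd2 : 2 ∣ ∑ j : Fin n, (j.val + 1) := by exact_mod_cast hdvd
    have hgauss : (∑ j : Fin n, (j.val + 1)) * 2 = n * (n + 1) := by
      rw [Fin.sum_univ_eq_sum_range (fun i => i + 1) n]
      have h' : ∑ i ∈ Finset.range n, (i + 1) = ∑ i ∈ Finset.range (n + 1), i := by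
        rw [Finset.sum_range_succ' (fun i => i) n]
        simp
      rw [h', Finset.sum_range_id_mul_two (n + 1), Nat.add_sub_cancel]
      ring
    obtain ⟨w, hw⟩ := hdvd2
    have hn4 : n * (n + 1) = 4 * w := by omega
    have hmod := Nat.mul_mod n (n + 1) 4
    rcases (by omega : n % 4 = 0 ∨ n % 4 = 1 ∨ n % 4 = 2 ∨ n % 4 = 3) with h4 | h4 | h4 | h4
    · exact Or.inl h4
    · exfalso
      rw [h4, (by omega : (n + 1) % 4 = 2)] at hmod
      omega
    · exfalso
      rw [h4, (by omega : (n + 1) % 4 = 3)] at hmod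
      omega
    · exact Or.inr h4
  · right
    exact ⟨by omega, by omega, hcount⟩


theorem smr_build (m r₀ n₀ k : ℕ) (hm : 2 ≤ m) (hr : 1 ≤ r₀)
    (hn : m * (r₀ + 4 * k) = 2 * (n₀ + 2 * m * k))
    (B₀ : Fin m → Fin r₀ → ℤ) (h₀ : GoodB m r₀ n₀ B₀) :
    SMR m (n₀ + 2 * m * k) (r₀ + 4 * k) 2 := by
  obtain ⟨B, hB⟩ := steps m hm k r₀ n₀ B₀ h₀
  exact smr_of_B m (r₀ + 4 * k) (n₀ + 2 * m * k) (by omega) (by omega) hn B hB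

end SMRaux

theorem stmt_19 (m n r : ℕ) (hm1 : 1 ≤ m) (hn1 : 1 ≤ n) (hr1 : 1 ≤ r) :
    SMR m n r 2 ↔
      (m = 2 ∧ n = r ∧ (r % 4 = 0 ∨ r % 4 = 3)) ∨
      (3 ≤ m ∧ 3 ≤ r ∧ m * r = 2 * n) := by
  constructor
  · exact SMRaux.forward m n r hm1 hn1 hr1
  · intro h
    have hmr : m * r = 2 * n := by
      rcases h with ⟨h2, hnr, -⟩ | ⟨-, -, h'⟩
      · subst h2; omega
      · exact h'
    have hm2 : 2 ≤ m := by rcases h with ⟨h2, -, -⟩ | ⟨h3, -, -⟩ <;> omega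
    have hr3 : 3 ≤ r := by
      rcases h with ⟨-, hnr, hr4 | hr4⟩ | ⟨-, h3, -⟩ <;> omega
    rcases (by omega : r % 4 = 0 ∨ r % 4 = 1 ∨ r % 4 = 2 ∨ r % 4 = 3) with h4 | h4 | h4 | h4
    · obtain ⟨k, hk⟩ : ∃ k, r = 4 + 4 * k := ⟨(r - 4) / 4, by omega⟩
      have hn' : n = 2 * m + 2 * m * k := by
        have h1 : m * (4 + 4 * k) = 4 * m + 4 * (m * k) := by ring
        have h2 : 2 * m + 2 * m * k = 2 * m + 2 * (m * k) := by ring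
        rw [hk] at hmr
        omega
      rw [hk, hn']
      exact SMRaux.smr_build m 4 (2 * m) k hm2 (by omega) (by ring)
        (SMRaux.S4B m) (SMRaux.s4_good m hm2)
    · have hrodd : r % 2 = 1 := by omega
      have hmod := Nat.mul_mod m r 2
      rw [hrodd] at hmod
      have hmeven : m % 2 = 0 := by omega
      have hmne2 : m ≠ 2 := by
        rcases h with ⟨-, -, h0 | h0⟩ | ⟨h3, -, -⟩ <;> omega
      obtain ⟨t, ht⟩ : ∃ t, m = 2 * t := ⟨m / 2, by omega⟩
      have ht2 : 2 ≤ t := by omega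
      subst ht
      obtain ⟨k, hk⟩ : ∃ k, r = 5 + 4 * k := ⟨(r - 5) / 4, by omega⟩
      have hn' : n = 5 * t + 2 * (2 * t) * k := by
        have h1 : (2 * t) * (5 + 4 * k) = 10 * t + 8 * (t * k) := by ring
        have h2 : 5 * t + 2 * (2 * t) * k = 5 * t + 4 * (t * k) := by ring
        rw [hk] at hmr
        omega
      rw [hk, hn']
      exact SMRaux.smr_build (2 * t) 5 (5 * t) k (by omega) (by omega) (by ring)
        (SMRaux.P5B t) (SMRaux.p5_good t ht2)
    · have hm3 : 3 ≤ m := by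
        rcases h with ⟨-, hnr, h0 | h0⟩ | ⟨h3, -, -⟩ <;> omega
      obtain ⟨k, hk⟩ : ∃ k, r = 6 + 4 * k := ⟨(r - 6) / 4, by omega⟩
      have hn' : n = 3 * m + 2 * m * k := by
        have h1 : m * (6 + 4 * k) = 6 * m + 4 * (m * k) := by ring
        have h2 : 3 * m + 2 * m * k = 3 * m + 2 * (m * k) := by ring
        rw [hk] at hmr
        omega
      rw [hk, hn']
      exact SMRaux.smr_build m 6 (3 * m) k (by omega) (by omega) (by ring)
        (SMRaux.R6B m) (SMRaux.r6_good m hm3)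
    · have hrodd : r % 2 = 1 := by omega
      have hmod := Nat.mul_mod m r 2
      rw [hrodd] at hmod
      have hmeven : m % 2 = 0 := by omega
      obtain ⟨t, ht⟩ : ∃ t, m = 2 * t := ⟨m / 2, by omega⟩
      have ht1 : 1 ≤ t := by omega
      subst ht
      obtain ⟨k, hk⟩ : ∃ k, r = 3 + 4 * k := ⟨(r - 3) / 4, by omega⟩
      have hn' : n = 3 * t + 2 * (2 * t) * k := by
        have h1 : (2 * t) * (3 + 4 * k) = 6 * t + 8 * (t * k) := by ring
        have h2 : 3 * t + 2 * (2 * t) * k = 3 * t + 4 * (t * k) := by ring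
        rw [hk] at hmr
        omega
      rw [hk, hn']
      exact SMRaux.smr_build (2 * t) 3 (3 * t) k (by omega) (by omega) (by ring)
        (SMRaux.P3B t) (SMRaux.p3_good t ht1)
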